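/- arXiv:2007.14715 — 2 statements merged into one kernel-verified Lean document; each statement's English description precedes it below -/
import Mathlib

section
/- For every target state z in M_1^{(0),N}(Z_+), the one-step transition probability of Haigh's Muller-ratchet chain into z is bounded below uniformly over initial states: inf{ P_{z_0}( Z^N(1) = z ) : z_0 ∈ M_1^{(0),N}(Z_+) } > 0. -/
open scoped BigOperators Classical

noncomputable section

namespace MullerRatchet

/-- A population state: counts of individuals per number of deleterious mutations,
totalling `N` individuals.  This is the (count version of the) space `M_1^N(Z_+)`. -/
def State (N : ℕ) : Type := {z : ℕ →₀ ℕ // z.sum (fun _ n => n) = N}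

/-- Total selective weight `Σ_i z(i) (1-α)^i` of a population. -/
def totalWeight (N : ℕ) (α : ℝ) (z : State N) : ℝ :=
  z.1.sum fun i n => (n : ℝ) * (1 - α) ^ i

/-- Probability that one offspring chooses a parent carrying `i` mutations. -/
def parentProb (N : ℕ) (α : ℝ) (z : State N) (i : ℕ) : ℝ :=
  ((z.1 i : ℝ) * (1 - α) ^ i) / totalWeight N α z

/-- The Poisson(`lam`) probability mass function. -/
def poissonPMF (lam : ℝ) (k : ℕ) : ℝ :=
  Real.exp (-lam) * lam ^ k / (Nat.factorial k : ℝ)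

/-- Law of the number of mutations of one offspring: parent's type `i` plus an
independent Poisson(`lam`) number of new mutations. -/
def offspringProb (N : ℕ) (α lam : ℝ) (z : State N) (m : ℕ) : ℝ :=
  ∑ i ∈ Finset.range (m + 1), parentProb N α z i * poissonPMF lam (m - i)

/-- Empirical counts of the types of the `N` offspring. -/
def empCount (N : ℕ) (f : Fin N → ℕ) (m : ℕ) : ℕ :=
  (Finset.univ.filter fun n => f n = m).card

/-- One-step transition probability `P_z(Z^N(1) = y)` of Haigh's Muller-ratchet chain:
the `N` offspring choose their types independently according to `offspringProb`. -/
def step (N : ℕ) (α lam : ℝ) (z y : State N) : ℝ :=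
  ∑' f : Fin N → ℕ,
    if ∀ m, y.1 m = empCount N f m then ∏ n : Fin N, offspringProb N α lam z (f n) else 0

/-!
Every offspring picks a mutation-free parent with probability at least `1/N`, because an initial
state with `z₀(0) ≥ 1` has total fitness between `1` and `N`, and then acquires exactly `m`
mutations with probability `poissonPMF λ m`. So the offspring law dominates `(1/N) · Poisson(λ)`
pointwise, uniformly in `z₀`, and the probability that the `N` offspring realise one fixed
labelling of the target state is at least the product of these bounds.
-/

open Finset

lemma _root_.summable_prod_apply {β : Type*} {h : β → ℝ} (h0 : 0 ≤ h) (hs : Summable h) :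
    ∀ n : ℕ, Summable fun f : Fin n → β => ∏ i, h (f i)
  | 0 => .of_finite
  | n + 1 => by
    rw [← (Fin.consEquiv fun _ => β).summable_iff]
    refine (hs.mul_of_nonneg (summable_prod_apply h0 hs n) h0
      fun f => prod_nonneg fun i _ => h0 (f i)).congr fun p => ?_
    simp [Fin.consEquiv, Fin.prod_univ_succ]

lemma _root_.Multiset.exists_map_univ_eq {α : Type*} {s : Multiset α} {n : ℕ}
    (hs : Multiset.card s = n) : ∃ f : Fin n → α, univ.val.map f = s := by
  obtain ⟨l, rfl⟩ : ∃ l : List α, (l : Multiset α) = s := ⟨s.toList, s.coe_toList⟩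
  rw [Multiset.coe_card] at hs
  subst hs
  exact ⟨l.get, by rw [Fin.univ_val_map, List.ofFn_get]⟩

lemma empCount_eq_count {N : ℕ} (f : Fin N → ℕ) (m : ℕ) :
    empCount N f m = (univ.val.map f).count m := by
  rw [Multiset.count_map, empCount, card, filter_val]
  simp only [eq_comm]

lemma exists_empCount_eq {N : ℕ} (z : State N) :
    ∃ f : Fin N → ℕ, ∀ m, empCount N f m = z.1 m := by
  obtain ⟨f, hf⟩ := Multiset.exists_map_univ_eq (s := z.1.toMultiset) (n := N)
    (by rw [Finsupp.card_toMultiset]; exact z.2)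
  exact ⟨f, fun m => by rw [empCount_eq_count, hf, Finsupp.count_toMultiset]⟩

lemma State.apply_le {N : ℕ} (z : State N) (i : ℕ) : z.1 i ≤ N := by
  obtain ⟨z, rfl⟩ := z
  by_cases hi : i ∈ z.support
  · exact single_le_sum (f := fun i => z i) (fun _ _ => Nat.zero_le _) hi
  · simp [Finsupp.notMem_support_iff.1 hi]

lemma poissonPMF_pos {lam : ℝ} (hlam : 0 < lam) (k : ℕ) : 0 < poissonPMF lam k := by
  unfold poissonPMF
  positivity

lemma poissonPMF_nonneg {lam : ℝ} (hlam : 0 ≤ lam) (k : ℕ) : 0 ≤ poissonPMF lam k := by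
  unfold poissonPMF
  positivity

lemma summable_poissonPMF (lam : ℝ) : Summable (poissonPMF lam) :=
  ((Real.summable_pow_div_factorial lam).mul_left (Real.exp (-lam))).congr fun k => by
    simp [poissonPMF, mul_div_assoc]

section OffspringLaw

variable {N : ℕ} {α : ℝ} (z : State N)

lemma totalWeight_nonneg (hα1 : α ≤ 1) : 0 ≤ totalWeight N α z :=
  sum_nonneg fun i _ => mul_nonneg (Nat.cast_nonneg _) (pow_nonneg (by linarith) i)

lemma totalWeight_le (hα0 : 0 ≤ α) (hα1 : α ≤ 1) : totalWeight N α z ≤ N := by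
  obtain ⟨z, rfl⟩ := z
  calc totalWeight _ α ⟨z, rfl⟩ ≤ ∑ i ∈ z.support, (z i : ℝ) :=
        sum_le_sum fun i _ => mul_le_of_le_one_right (Nat.cast_nonneg _)
          (pow_le_one₀ (by linarith) (by linarith))
    _ = _ := by simp [Finsupp.sum]

lemma one_le_totalWeight (hα1 : α ≤ 1) (hz : 1 ≤ z.1 0) : 1 ≤ totalWeight N α z := by
  have hterm : ∀ i ∈ z.1.support, 0 ≤ (z.1 i : ℝ) * (1 - α) ^ i := fun i _ =>
    mul_nonneg (Nat.cast_nonneg _) (pow_nonneg (by linarith) _)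
  calc (1 : ℝ) ≤ z.1 0 * (1 - α) ^ 0 := by simpa using hz
    _ ≤ totalWeight N α z := single_le_sum hterm (Finsupp.mem_support_iff.2 (by omega))

lemma parentProb_nonneg (hα1 : α ≤ 1) (i : ℕ) : 0 ≤ parentProb N α z i :=
  div_nonneg (mul_nonneg (Nat.cast_nonneg _) (pow_nonneg (by linarith) i))
    (totalWeight_nonneg z hα1)

lemma summable_parentProb : Summable (parentProb N α z) :=
  summable_of_ne_finset_zero (s := z.1.support) fun i hi => by
    simp [parentProb, Finsupp.notMem_support_iff.1 hi]

lemma inv_le_parentProb_zero (hα0 : 0 ≤ α) (hα1 : α ≤ 1) (hz : 1 ≤ z.1 0) :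
    (N : ℝ)⁻¹ ≤ parentProb N α z 0 := by
  have hW := one_le_totalWeight z hα1 hz
  calc (N : ℝ)⁻¹ ≤ (totalWeight N α z)⁻¹ := inv_anti₀ (by linarith) (totalWeight_le z hα0 hα1)
    _ ≤ parentProb N α z 0 := by
      rw [parentProb, pow_zero, mul_one, div_eq_mul_inv]
      exact le_mul_of_one_le_left (by positivity) (by exact_mod_cast hz)

variable {lam : ℝ}

lemma offspringProb_nonneg (hα1 : α ≤ 1) (hlam : 0 ≤ lam) (m : ℕ) :
    0 ≤ offspringProb N α lam z m :=
  sum_nonneg fun i _ => mul_nonneg (parentProb_nonneg z hα1 i) (poissonPMF_nonneg hlam _)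

lemma summable_offspringProb : Summable (offspringProb N α lam z) :=
  (summable_norm_sum_mul_range_of_summable_norm (f := parentProb N α z) (g := poissonPMF lam)
    (summable_parentProb z).norm (summable_poissonPMF lam).norm).of_norm

lemma parentProb_zero_mul_poissonPMF_le_offspringProb (hα1 : α ≤ 1) (hlam : 0 ≤ lam) (m : ℕ) :
    parentProb N α z 0 * poissonPMF lam m ≤ offspringProb N α lam z m :=
  single_le_sum (f := fun i => parentProb N α z i * poissonPMF lam (m - i))
    (fun i _ => mul_nonneg (parentProb_nonneg z hα1 i) (poissonPMF_nonneg hlam _))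
    (mem_range.2 m.succ_pos)

lemma prod_offspringProb_le_step (hα1 : α ≤ 1) (hlam : 0 ≤ lam) {y : State N}
    {f : Fin N → ℕ} (hf : ∀ m, y.1 m = empCount N f m) :
    ∏ n, offspringProb N α lam z (f n) ≤ step N α lam z y := by
  have hprod_nonneg : ∀ g : Fin N → ℕ, 0 ≤ ∏ n, offspringProb N α lam z (g n) :=
    fun g => prod_nonneg fun n _ => offspringProb_nonneg z hα1 hlam (g n)
  have hsummand_nonneg : ∀ g : Fin N → ℕ, 0 ≤ if ∀ m, y.1 m = empCount N g m then
      ∏ n, offspringProb N α lam z (g n) else 0 := fun g => by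
    split_ifs
    exacts [hprod_nonneg g, le_rfl]
  -- Without summability the `tsum` defining `step` would be the junk value `0`.
  have hsummable := (summable_prod_apply (offspringProb_nonneg z hα1 hlam)
    (summable_offspringProb z) N).of_nonneg_of_le hsummand_nonneg fun g => by
      split_ifs
      exacts [le_rfl, hprod_nonneg g]
  calc ∏ n, offspringProb N α lam z (f n)
      = if ∀ m, y.1 m = empCount N f m then ∏ n, offspringProb N α lam z (f n) else 0 :=
        (if_pos hf).symm
    _ ≤ step N α lam z y := hsummable.le_tsum f fun g _ => hsummand_nonneg g

end OffspringLaw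

theorem statement0_general (N : ℕ) (α lam : ℝ)
    (hα0 : 0 < α) (hα1 : α < 1) (hlam : 0 < lam)
    (z : State N) (hz : 1 ≤ z.1 0) :
    ∃ c : ℝ, 0 < c ∧ ∀ z₀ : State N, 1 ≤ z₀.1 0 → c ≤ step N α lam z₀ z := by
  obtain ⟨f, hf⟩ := exists_empCount_eq z
  have hbound_pos : ∀ m, 0 < (N : ℝ)⁻¹ * poissonPMF lam m := fun m =>
    mul_pos (inv_pos.2 (by exact_mod_cast hz.trans (State.apply_le z 0))) (poissonPMF_pos hlam m)
  refine ⟨∏ n, (N : ℝ)⁻¹ * poissonPMF lam (f n), prod_pos fun n _ => hbound_pos (f n),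
    fun z₀ hz₀ => ?_⟩
  calc ∏ n, (N : ℝ)⁻¹ * poissonPMF lam (f n)
      ≤ ∏ n, offspringProb N α lam z₀ (f n) := by
        refine prod_le_prod (fun n _ => (hbound_pos (f n)).le) fun n _ => ?_
        exact (mul_le_mul_of_nonneg_right (inv_le_parentProb_zero z₀ hα0.le hα1.le hz₀)
          (poissonPMF_pos hlam _).le).trans
          (parentProb_zero_mul_poissonPMF_le_offspringProb z₀ hα1.le hlam.le _)
    _ ≤ step N α lam z₀ z := prod_offspringProb_le_step z₀ hα1.le hlam.le fun m => (hf m).symm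

/-- for every target state `z ∈ M_1^{(0),N}(Z_+)` (i.e. `z(0) ≥ 1/N`),
the one-step transition probability into `z` is bounded below, uniformly over all
initial states `z₀ ∈ M_1^{(0),N}(Z_+)`. -/
theorem statement0 (N : ℕ) (hN : 1 ≤ N) (α lam : ℝ)
    (hα0 : 0 < α) (hα1 : α < 1) (hlam : 0 < lam)
    (z : State N) (hz : 1 ≤ z.1 0) :
    ∃ c : ℝ, 0 < c ∧ ∀ z₀ : State N, 1 ≤ z₀.1 0 → c ≤ step N α lam z₀ z :=
  statement0_general N α lam hα0 hα1 hlam z hz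

end MullerRatchet
end
end

section
/- Let d ≥ 1 and k ≥ 1 be integers, α > 0, λ > 0, and let x = (x_0, …, x_d) satisfy x_i ≥ 0 and Σ_{i=0}^d x_i = 1. Define M_j := Σ_{i=0}^d i^j x_i. Then V_k := α ( M_1 · M_k − M_{k+1} ) + λ Σ_{ℓ=0}^{d−1} (ℓ+1)^k x_ℓ − λ ( M_k − d^k x_d ) ≤ λ (2^k − 1) M_k + λ. -/
/-!
The selection part of the drift is `α (M₁ M_k - M_{k+1}) ≤ 0` by Chebyshev's sum inequality for
the comonotone weights `i` and `i ^ k` under the probability vector `x`. In the mutation part,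
shifting mass from `ℓ` to `ℓ + 1` multiplies `ℓ ^ k` by at most `2 ^ k` when `ℓ ≥ 1`, and the
class `ℓ = 0` costs at most its mass, which is `≤ 1`.
-/

open Finset

theorem MonovaryOn.sum_mul_sum_le_sum_mul_sum_of_nonneg {ι R : Type*} [CommRing R] [LinearOrder R]
    [IsStrictOrderedRing R] {s : Finset ι} {f g w : ι → R} (hfg : MonovaryOn f g s)
    (hw : ∀ i ∈ s, 0 ≤ w i) :
    (∑ i ∈ s, f i * w i) * (∑ i ∈ s, g i * w i) ≤ (∑ i ∈ s, w i) * ∑ i ∈ s, f i * g i * w i := by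
  have hpairs : 0 ≤ ∑ i ∈ s, ∑ j ∈ s, w i * w j * ((f j - f i) * (g j - g i)) :=
    sum_nonneg fun i hi => sum_nonneg fun j hj =>
      mul_nonneg (mul_nonneg (hw i hi) (hw j hj)) (hfg.sub_mul_sub_nonneg hi hj)
  have hexpand : ∑ i ∈ s, ∑ j ∈ s, w i * w j * ((f j - f i) * (g j - g i)) =
      (∑ i ∈ s, w i) * (∑ j ∈ s, f j * g j * w j) - (∑ i ∈ s, f i * w i) * (∑ j ∈ s, g j * w j)
        - (∑ i ∈ s, g i * w i) * (∑ j ∈ s, f j * w j)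
        + (∑ i ∈ s, f i * g i * w i) * (∑ j ∈ s, w j) := by
    simp only [sum_mul_sum, ← sum_sub_distrib, ← sum_add_distrib]
    exact sum_congr rfl fun i _ => sum_congr rfl fun j _ => by ring
  linarith [mul_comm (∑ i ∈ s, g i * w i) (∑ j ∈ s, f j * w j),
    mul_comm (∑ i ∈ s, f i * g i * w i) (∑ j ∈ s, w j)]

theorem Nat.add_one_pow_le_two_pow_mul_pow_add_one (l k : ℕ) :
    (l + 1) ^ k ≤ 2 ^ k * l ^ k + 1 := by
  rcases Nat.eq_zero_or_pos l with rfl | hl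
  · rcases k with _ | k <;> simp
  · calc (l + 1) ^ k ≤ (2 * l) ^ k := Nat.pow_le_pow_left (by omega) k
      _ ≤ 2 ^ k * l ^ k + 1 := by rw [Nat.mul_pow]; omega

namespace MullerRatchet

def moment (d : ℕ) (x : ℕ → ℝ) (j : ℕ) : ℝ := ∑ i ∈ range (d + 1), (i : ℝ) ^ j * x i

variable {d : ℕ} {x : ℕ → ℝ}

theorem moment_one_mul_moment_le (hx : ∀ i, 0 ≤ x i) (hsum : ∑ i ∈ range (d + 1), x i = 1)
    (k : ℕ) : moment d x 1 * moment d x k ≤ moment d x (k + 1) := by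
  have hmono : MonovaryOn (fun i : ℕ => (i : ℝ)) (fun i : ℕ => (i : ℝ) ^ k) ↑(range (d + 1)) :=
    (Monotone.monovary (fun _ _ h => by exact_mod_cast h)
      (fun _ _ h => pow_le_pow_left₀ (Nat.cast_nonneg _) (by exact_mod_cast h) k)).monovaryOn _
  have := hmono.sum_mul_sum_le_sum_mul_sum_of_nonneg fun i _ => hx i
  simpa only [moment, pow_one, hsum, one_mul, ← pow_succ'] using this

theorem sum_shift_pow_mul_add_le (hx : ∀ i, 0 ≤ x i) (k : ℕ) :
    ∑ l ∈ range d, ((l : ℝ) + 1) ^ k * x l + (d : ℝ) ^ k * x d ≤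
      2 ^ k * moment d x k + ∑ l ∈ range d, x l := by
  have hshift : ∀ l ∈ range d, ((l : ℝ) + 1) ^ k * x l ≤ 2 ^ k * ((l : ℝ) ^ k * x l) + x l :=
    fun l _ => by
      have : ((l : ℝ) + 1) ^ k ≤ 2 ^ k * (l : ℝ) ^ k + 1 := by
        exact_mod_cast Nat.add_one_pow_le_two_pow_mul_pow_add_one l k
      nlinarith [hx l]
  have htop : (d : ℝ) ^ k * x d ≤ 2 ^ k * ((d : ℝ) ^ k * x d) :=
    le_mul_of_one_le_left (mul_nonneg (by positivity) (hx d)) (one_le_pow₀ one_le_two)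
  have hsplit := sum_le_sum hshift
  rw [sum_add_distrib, ← mul_sum] at hsplit
  rw [moment, sum_range_succ, mul_add]
  linarith

end MullerRatchet

open MullerRatchet in
theorem statement12_general (d k : ℕ)
    (α lam : ℝ) (hα : 0 < α) (hlam : 0 < lam)
    (x : ℕ → ℝ) (hx : ∀ i, 0 ≤ x i)
    (hsum : ∑ i ∈ Finset.range (d + 1), x i = 1) :
    α * ((∑ i ∈ Finset.range (d + 1), (i : ℝ) ^ (1 : ℕ) * x i) *
            (∑ i ∈ Finset.range (d + 1), (i : ℝ) ^ k * x i) -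
          ∑ i ∈ Finset.range (d + 1), (i : ℝ) ^ (k + 1) * x i) +
        lam * (∑ l ∈ Finset.range d, ((l : ℝ) + 1) ^ k * x l) -
        lam * ((∑ i ∈ Finset.range (d + 1), (i : ℝ) ^ k * x i) - (d : ℝ) ^ k * x d)
      ≤ lam * (2 ^ k - 1) * (∑ i ∈ Finset.range (d + 1), (i : ℝ) ^ k * x i) + lam := by
  have hselection := moment_one_mul_moment_le hx hsum k
  have hmutation := sum_shift_pow_mul_add_le (d := d) hx k
  have hmass : ∑ l ∈ range d, x l ≤ 1 := by
    rw [sum_range_succ] at hsum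
    linarith [hx d]
  simp only [moment] at hselection hmutation
  have hselection_nonpos := mul_nonpos_of_nonneg_of_nonpos hα.le (sub_nonpos.mpr hselection)
  have hmutation_le : ∑ l ∈ range d, ((l : ℝ) + 1) ^ k * x l
      - (∑ i ∈ range (d + 1), (i : ℝ) ^ k * x i - (d : ℝ) ^ k * x d)
      ≤ (2 ^ k - 1) * ∑ i ∈ range (d + 1), (i : ℝ) ^ k * x i + 1 := by
    linarith
  linear_combination hselection_nonpos + mul_le_mul_of_nonneg_left hmutation_le hlam.le

/-- drift bound `V_k ≤ λ (2^k - 1) M_k + λ` for the `k`-th moment of the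
finite-dimensional Muller-ratchet diffusion, where `x` is a point of the
`d`-dimensional simplex and `M_j = Σ_{i=0}^d i^j x_i`. -/
theorem statement12 (d k : ℕ) (hd : 1 ≤ d) (hk : 1 ≤ k)
    (α lam : ℝ) (hα : 0 < α) (hlam : 0 < lam)
    (x : ℕ → ℝ) (hx : ∀ i, 0 ≤ x i)
    (hsum : ∑ i ∈ Finset.range (d + 1), x i = 1) :
    α * ((∑ i ∈ Finset.range (d + 1), (i : ℝ) ^ (1 : ℕ) * x i) *
            (∑ i ∈ Finset.range (d + 1), (i : ℝ) ^ k * x i) -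
          ∑ i ∈ Finset.range (d + 1), (i : ℝ) ^ (k + 1) * x i) +
        lam * (∑ l ∈ Finset.range d, ((l : ℝ) + 1) ^ k * x l) -
        lam * ((∑ i ∈ Finset.range (d + 1), (i : ℝ) ^ k * x i) - (d : ℝ) ^ k * x d)
      ≤ lam * (2 ^ k - 1) * (∑ i ∈ Finset.range (d + 1), (i : ℝ) ^ k * x i) + lam :=
  statement12_general d k α lam hα hlam x hx hsum
end
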